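/- arXiv:0804.3717 — 4 statements merged into one kernel-verified Lean document; each statement's English description precedes it below -/
import Mathlib

section
/- Let θ'(ξ) = γ(1/(ξ+iξ_c) + 1/(ξ−iξ_c)) and f(ξ) = iξ_c/(ξ+iξ_c). Then for every m ≥ 1, θ'(ξ)·Re(f(ξ)^m) = −(γ/ξ_c) Σ_{j=0}^{m−1} σ_j 2^{−j} Im(f(ξ)^{m+1−j}), where σ_0 = −1 and σ_j = 1 for j ≥ 1. -/
open Complex Finset

/-! `f = iξ_c/(ξ+iξ_c)` has `Re(1/f) = 1`, i.e. `Re f = |f|²`, and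
`θ'(ξ) = 2γξ/(ξ²+ξ_c²) = 2γ Im f / ξ_c`. So it suffices that `T_m := Σ_{j<m} σ_j 2^{−j} Im f^{m+1−j}` equals
`−2 Im f · Re f^m`. These sums obey `T_{m+1} = T_m / 2 + Im f^{m+1} − Im f^{m+2}`, and the
relation `Re f = |f|²` is exactly what makes `−2 Im f · Re f^m` obey the same recursion. -/

lemma sum_range_sign_half_pow_succ (B : ℕ → ℝ) {m : ℕ} (hm : 1 ≤ m) :
    ∑ j ∈ range (m + 1), (if j = 0 then (-1 : ℝ) else 1) * (1 / 2) ^ j * B (m + 1 + 1 - j) =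
      (∑ j ∈ range m, (if j = 0 then (-1 : ℝ) else 1) * (1 / 2) ^ j * B (m + 1 - j)) / 2
        + B (m + 1) - B (m + 1 + 1) := by
  obtain ⟨n, rfl⟩ := Nat.exists_eq_add_of_le' hm
  simp only [sum_range_succ' _ (n + 1), sum_range_succ' _ n, Nat.add_sub_add_right,
    if_neg (Nat.succ_ne_zero _), if_pos, pow_succ, Nat.sub_zero]
  ring_nf
  rw [← sum_mul, ← sum_mul]
  ring

theorem sum_sign_half_pow_mul_im_pow {z : ℂ} (hz : normSq z = z.re) {m : ℕ} (hm : 1 ≤ m) :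
    ∑ j ∈ range m, (if j = 0 then (-1 : ℝ) else 1) * (1 / 2) ^ j * (z ^ (m + 1 - j)).im =
      -2 * z.im * (z ^ m).re := by
  induction m, hm using Nat.le_induction with
  | base => simp [sq, mul_im]; ring
  | succ m hm ih =>
    rw [sum_range_sign_half_pow_succ (fun k => (z ^ k).im) hm, ih]
    rw [normSq_apply] at hz
    simp only [pow_succ, mul_re, mul_im]
    linear_combination -(z ^ m).im * hz

lemma re_div_add_I_mul (x c : ℝ) :
    (I * c / (x + I * c)).re = c ^ 2 / (x ^ 2 + c ^ 2) := by
  simp [div_re, normSq_apply]; ring_nf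

lemma im_div_add_I_mul (x c : ℝ) :
    (I * c / (x + I * c)).im = x * c / (x ^ 2 + c ^ 2) := by
  simp [div_im, normSq_apply]; ring_nf

lemma normSq_div_add_I_mul (x c : ℝ) :
    normSq (I * c / (x + I * c)) = (I * c / (x + I * c)).re := by
  rw [normSq_apply, re_div_add_I_mul, im_div_add_I_mul]
  rcases eq_or_ne (x ^ 2 + c ^ 2) 0 with h | h
  · simp [h]
  · field_simp; ring

lemma inv_add_I_mul_add_inv_sub_I_mul (x c : ℝ) :
    (x + I * c)⁻¹ + (x - I * c)⁻¹ = ((2 * x / (x ^ 2 + c ^ 2) : ℝ) : ℂ) := by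
  apply Complex.ext <;> simp only [ofReal_re, ofReal_im] <;> simp [inv_re, inv_im, normSq_apply] <;> ring

/-- With `θ'(ξ) = γ(1/(ξ+iξ_c) + 1/(ξ−iξ_c))` and `f(ξ) = iξ_c/(ξ+iξ_c)`, for every
`m ≥ 1`: `θ'(ξ)·Re(f(ξ)^m) = −(γ/ξ_c) Σ_{j=0}^{m−1} σ_j 2^{−j} Im(f(ξ)^{m+1−j})`,
where `σ_0 = −1` and `σ_j = 1` for `j ≥ 1`. -/
theorem theta_mul_re_pow (γ ξc : ℝ) (hξc : 0 < ξc) (m : ℕ) (hm : 1 ≤ m) (ξ : ℝ) :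
    (γ : ℂ) * ((ξ + Complex.I * ξc)⁻¹ + (ξ - Complex.I * ξc)⁻¹) *
        (((Complex.I * ξc / (ξ + Complex.I * ξc)) ^ m).re : ℂ) =
      -(γ / ξc : ℝ) * ∑ j ∈ Finset.range m,
        (((if j = 0 then (-1 : ℝ) else 1) : ℂ) * (1 / 2) ^ j *
          (((Complex.I * ξc / (ξ + Complex.I * ξc)) ^ (m + 1 - j)).im : ℂ)) := by
  have hsum := sum_sign_half_pow_mul_im_pow (normSq_div_add_I_mul ξ ξc) hm
  set f := I * ξc / (ξ + I * ξc)
  have hreal : γ * (2 * ξ / (ξ ^ 2 + ξc ^ 2)) * (f ^ m).re = -(γ / ξc) *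
      ∑ j ∈ range m, (if j = 0 then (-1 : ℝ) else 1) * (1 / 2) ^ j * (f ^ (m + 1 - j)).im := by
    rw [hsum, im_div_add_I_mul]
    field_simp
  rw [inv_add_I_mul_add_inv_sub_I_mul]
  have hcast := congrArg ((↑) : ℝ → ℂ) hreal
  push_cast [apply_ite ((↑) : ℝ → ℂ)] at hcast ⊢
  exact hcast
end

section
/- Let (α_n) be a sequence of reals (indexed by even n) satisfying α_{n+2} = α_n(1 − γ²/(n−1)²) − γ² c_n with |c_n| ≤ C(1/n + 1/(n−1)) for a constant C. Then there exists C₁ such that |α_n| ≤ C₁ ln n for all n ≥ 2. -/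
/-!
Since `a_k = γ² / (2k+1)²` is summable, the recursion gives
`|α_{k+1}| ≤ (1 + a_k) |α_k| + γ² |c_k|`, and the discrete Grönwall inequality bounds `|α_k|` by
`exp (∑ a) (|α_0| + γ² ∑_{j<k} |c_j|)`. The bound on `c_j` sums exactly to the harmonic number
`H_{2k} ≤ 1 + log (2k)`, so `|α_k|` grows at most like `log (2k + 2)`.
-/

open Real Finset

lemma harmonic_two_mul (n : ℕ) :
    (harmonic (2 * n) : ℝ) =
      ∑ j ∈ range n, (1 / (2 * (j : ℝ) + 2) + 1 / (2 * (j : ℝ) + 1)) := by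
  induction n with
  | zero => simp
  | succ n ih =>
    rw [Nat.mul_succ, harmonic_succ, harmonic_succ, sum_range_succ, ← ih]
    push_cast
    ring

lemma harmonic_two_mul_le_one_add_log (n : ℕ) :
    (harmonic (2 * n) : ℝ) ≤ 1 + log (2 * n + 2) := by
  refine (harmonic_le_one_add_log _).trans ?_
  push_cast
  rcases n.eq_zero_or_pos with rfl | hn
  · simp [log_nonneg one_le_two]
  · gcongr
    linarith

lemma sum_abs_le_mul_one_add_log {c : ℕ → ℝ} {C : ℝ} (hC : 0 ≤ C)
    (hc : ∀ k : ℕ, |c k| ≤ C * (1 / (2 * (k : ℝ) + 2) + 1 / (2 * (k : ℝ) + 1))) (n : ℕ) :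
    ∑ j ∈ range n, |c j| ≤ C * (1 + log (2 * n + 2)) :=
  calc ∑ j ∈ range n, |c j| ≤ C * harmonic (2 * n) := by
        rw [harmonic_two_mul, mul_sum]
        exact sum_le_sum fun j _ => hc j
    _ ≤ C * (1 + log (2 * n + 2)) := by gcongr; exact harmonic_two_mul_le_one_add_log n

lemma summable_div_two_mul_add_one_sq (x : ℝ) :
    Summable fun j : ℕ => x / (2 * (j : ℝ) + 1) ^ 2 := by
  have h : Summable fun j : ℕ => 1 / (2 * (j : ℝ) + 1) ^ 2 := by
    refine .of_nonneg_of_le (fun j => by positivity) (fun j => ?_)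
      ((summable_nat_add_iff 1).mpr (Real.summable_one_div_nat_pow.mpr one_lt_two))
    push_cast
    gcongr
    linarith [(j.cast_nonneg : (0 : ℝ) ≤ j)]
  simpa only [mul_one_div] using h.mul_left x

lemma discrete_gronwall_tsum {u a b : ℕ → ℝ} (hu₀ : 0 ≤ u 0)
    (hu : ∀ n, u (n + 1) ≤ (1 + a n) * u n + b n) (ha : ∀ n, 0 ≤ a n) (hsum : Summable a)
    (hb : ∀ n, 0 ≤ b n) (k : ℕ) :
    u k ≤ (u 0 + ∑ j ∈ range k, b j) * exp (∑' j, a j) := by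
  refine (discrete_gronwall hu₀ (fun n _ => hu n) (fun n _ => ha n) (fun n _ => hb n)
    k.zero_le).trans ?_
  rw [← range_eq_Ico]
  have : 0 ≤ ∑ j ∈ range k, b j := sum_nonneg fun j _ => hb j
  gcongr
  exact hsum.sum_le_tsum _ fun j _ => ha j

lemma exists_pos_le_mul_of_le_add_mul {u L : ℕ → ℝ} {A B ℓ : ℝ} (hA : 0 ≤ A) (hℓ : 0 < ℓ)
    (hL : ∀ k, ℓ ≤ L k) (hu : ∀ k, u k ≤ A + B * L k) : ∃ C₁ > 0, ∀ k, u k ≤ C₁ * L k := by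
  refine ⟨A / ℓ + |B| + 1, by positivity, fun k => ?_⟩
  have hLk : 0 < L k := hℓ.trans_le (hL k)
  have hA_le : A ≤ A / ℓ * L k := by
    rw [div_mul_eq_mul_div, le_div_iff₀ hℓ]
    exact mul_le_mul_of_nonneg_left (hL k) hA
  nlinarith [hu k, le_abs_self B]

lemma abs_mul_one_sub_sub_le {x y a : ℝ} (ha : 0 ≤ a) :
    |x * (1 - a) - y| ≤ (1 + a) * |x| + |y| :=
  calc |x * (1 - a) - y| ≤ |1 - a| * |x| + |y| := by rw [mul_comm, ← abs_mul]; exact abs_sub _ _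
    _ ≤ (1 + a) * |x| + |y| := by
      gcongr
      exact abs_sub_le_iff.mpr ⟨by linarith, by linarith⟩

/-- If `α` (indexed by even `n = 2k+2`) satisfies
`α_{n+2} = α_n(1 − γ²/(n−1)²) − γ² c_n` with `|c_n| ≤ C(1/n + 1/(n−1))`, then
`|α_n| ≤ C₁ ln n` for all `n ≥ 2`. -/
theorem alpha_log_bound (γ C : ℝ) (hC : 0 < C) (α c : ℕ → ℝ)
    (hrec : ∀ k : ℕ,
      α (k + 1) = α k * (1 - γ ^ 2 / ((2 * (k : ℝ) + 1) ^ 2)) - γ ^ 2 * c k)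
    (hc : ∀ k : ℕ, |c k| ≤ C * (1 / (2 * (k : ℝ) + 2) + 1 / (2 * (k : ℝ) + 1))) :
    ∃ C₁ > 0, ∀ k : ℕ, |α k| ≤ C₁ * Real.log (2 * (k : ℝ) + 2) := by
  set S := ∑' j : ℕ, γ ^ 2 / (2 * (j : ℝ) + 1) ^ 2
  have hstep (n : ℕ) :
      |α (n + 1)| ≤ (1 + γ ^ 2 / (2 * (n : ℝ) + 1) ^ 2) * |α n| + γ ^ 2 * |c n| := by
    rw [hrec, ← abs_of_nonneg (sq_nonneg γ), ← abs_mul, abs_of_nonneg (sq_nonneg γ)]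
    exact abs_mul_one_sub_sub_le (by positivity)
  have hlog2 (k : ℕ) : log 2 ≤ log (2 * (k : ℝ) + 2) :=
    log_le_log two_pos (by linarith [(k.cast_nonneg : (0 : ℝ) ≤ k)])
  refine exists_pos_le_mul_of_le_add_mul (A := exp S * (|α 0| + γ ^ 2 * C))
    (B := exp S * (γ ^ 2 * C)) (by positivity) (log_pos one_lt_two) hlog2 fun k => ?_
  calc |α k| ≤ (|α 0| + ∑ j ∈ range k, γ ^ 2 * |c j|) * exp S :=
        discrete_gronwall_tsum (u := fun n => |α n|) (b := fun n => γ ^ 2 * |c n|)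
          (abs_nonneg _) hstep (fun n => by positivity)
          (summable_div_two_mul_add_one_sq _) (fun n => by positivity) k
    _ ≤ (|α 0| + γ ^ 2 * (C * (1 + log (2 * (k : ℝ) + 2)))) * exp S := by
        rw [← mul_sum]
        gcongr
        exact sum_abs_le_mul_one_add_log hC.le hc k
    _ = _ := by ring
end

section
/- Let a_j^{(n)} be reals with |a_0^{(n)}| + |a_1^{(n)}| ≤ A and |a_j^{(n)}| ≤ C₂ p^j/(n−1) for j ≥ 2, and define b_j^{(n)} = (1/(n−j)) Σ_{m=0}^{j} σ_{j−m} a_m^{(n)} where σ_0 = −1 and σ_k = 1 for k ≥ 1. Then there exists C₃ > 0 such that p^{−j} |b_j^{(n)}| ≤ C₃/(n−1) for all 0 ≤ j ≤ n−1. -/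
/-!
By the triangle inequality `|b_j| ≤ (Σ_{m ≤ j} |a_m|)/(n - j)`, and the geometric sum gives
`Σ_{m ≤ j} |a_m| ≤ A + C₂ p^{j+1}/((p - 1)(n - 1))`. Multiplied by `p^{-j}`, the second part
contributes `O(1/(n-1))` at once. For the first part, the weight `p^{-j}/(n - j)` is at most
`p/((p - 1)(n - 1))`: the factor `j + 1` lost in `1/(n - j) ≤ (j + 1)/n` is absorbed by
Bernoulli's inequality `(j + 1)(p - 1) ≤ p^{j+1}`.
-/

open Finset

lemma sum_range_le_add_sum_Ico_two {M : Type*} [AddCommMonoid M] [PartialOrder M]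
    [IsOrderedAddMonoid M] {f : ℕ → M} (hf : ∀ m, 0 ≤ f m) (k : ℕ) :
    ∑ m ∈ range k, f m ≤ f 0 + f 1 + ∑ m ∈ Ico 2 k, f m := by
  rcases le_or_gt 2 k with hk | hk
  · rw [← sum_range_add_sum_Ico f hk, sum_range_succ, sum_range_one]
  · interval_cases k
    · simpa using add_nonneg (hf 0) (hf 1)
    · simpa using le_add_of_nonneg_right (hf 1)

lemma geom_sum_le_pow_div_sub_one {p : ℝ} (hp : 1 < p) (k : ℕ) :
    ∑ m ∈ range k, p ^ m ≤ p ^ k / (p - 1) := by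
  rw [geom_sum_eq hp.ne']
  gcongr
  linarith

lemma natCast_le_succ_mul_sub {j n : ℕ} (hj : j < n) : (n : ℝ) ≤ (j + 1) * (n - j) := by
  have : (j : ℝ) + 1 ≤ n := by exact_mod_cast hj
  nlinarith [(Nat.cast_nonneg j : (0 : ℝ) ≤ j)]

lemma inv_pow_div_sub_le {p : ℝ} (hp : 1 < p) {j n : ℕ} (hn : 2 ≤ n) (hj : j < n) :
    (p ^ j)⁻¹ / (n - j) ≤ p / (p - 1) / (n - 1) := by
  have hp1 : 0 < p - 1 := by linarith
  have hn1 : (1 : ℝ) < n := by exact_mod_cast hn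
  have hnj : (0 : ℝ) < n - j := by
    have : (j : ℝ) < n := by exact_mod_cast hj
    linarith
  have hbern : ((j + 1 : ℕ) : ℝ) ≤ p ^ (j + 1) / (p - 1) := Nat.cast_le_pow_div_sub hp (j + 1)
  rw [le_div_iff₀ hp1, Nat.cast_succ, pow_succ] at hbern
  rw [← one_div, div_div, div_div, div_le_div_iff₀ (by positivity) (by nlinarith), one_mul]
  calc (p - 1) * (n - 1) ≤ (p - 1) * ((j + 1) * (n - j)) := by
        gcongr; linarith [natCast_le_succ_mul_sub hj]
    _ = (j + 1) * (p - 1) * (n - j) := by ring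
    _ ≤ p ^ j * p * (n - j) := by gcongr
    _ = p * (p ^ j * (n - j)) := by ring

lemma sum_abs_le_of_coeff_bounds {p A C₂ : ℝ} (hp : 1 < p) (hC₂ : 0 ≤ C₂) {n : ℕ} (hn : 1 ≤ n)
    {a : ℕ → ℝ} (ha₀₁ : |a 0| + |a 1| ≤ A)
    (ha : ∀ j : ℕ, 2 ≤ j → j ≤ n - 1 → |a j| ≤ C₂ * p ^ j / ((n : ℝ) - 1))
    {j : ℕ} (hj : j ≤ n - 1) :
    ∑ m ∈ range (j + 1), |a m| ≤ A + C₂ * (p / (p - 1)) * p ^ j / ((n : ℝ) - 1) := by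
  have hp1 : 0 < p - 1 := by linarith
  have hn1 : (0 : ℝ) ≤ n - 1 := by
    have : (1 : ℝ) ≤ n := by exact_mod_cast hn
    linarith
  have htail : ∑ m ∈ Ico 2 (j + 1), |a m| ≤ C₂ * (p / (p - 1)) * p ^ j / ((n : ℝ) - 1) :=
    calc ∑ m ∈ Ico 2 (j + 1), |a m|
        ≤ ∑ m ∈ Ico 2 (j + 1), C₂ / ((n : ℝ) - 1) * p ^ m := by
          refine sum_le_sum fun m hm => ?_
          rw [mem_Ico] at hm
          exact (ha m hm.1 (by omega)).trans_eq (by ring)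
      _ ≤ C₂ / ((n : ℝ) - 1) * ∑ m ∈ range (j + 1), p ^ m := by
          rw [← mul_sum]
          gcongr
          rw [range_eq_Ico]
          exact Ico_subset_Ico_left (by omega)
      _ ≤ C₂ / ((n : ℝ) - 1) * (p ^ (j + 1) / (p - 1)) := by
          gcongr; exact geom_sum_le_pow_div_sub_one hp _
      _ = C₂ * (p / (p - 1)) * p ^ j / ((n : ℝ) - 1) := by ring
  calc ∑ m ∈ range (j + 1), |a m| ≤ |a 0| + |a 1| + ∑ m ∈ Ico 2 (j + 1), |a m| :=
        sum_range_le_add_sum_Ico_two (fun _ => abs_nonneg _) _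
    _ ≤ _ := add_le_add ha₀₁ htail

/-- If `|a_0| + |a_1| ≤ A` and `|a_j| ≤ C₂ p^j/(n−1)` for `2 ≤ j ≤ n−1`, and
`b_j = (1/(n−j)) Σ_{m=0}^{j} σ_{j−m} a_m` with `σ_0 = −1`, `σ_k = 1` for `k ≥ 1`
(so `σ_{j−m} = −1` iff `m = j`), then there is `C₃ > 0` (depending only on
`p, A, C₂`) with `p^{−j}|b_j| ≤ C₃/(n−1)` for all `0 ≤ j ≤ n−1`. -/
theorem b_coefficient_bound (p A C₂ : ℝ) (hp : 1 < p) (hA : 0 < A) (hC₂ : 0 < C₂) :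
    ∃ C₃ > 0, ∀ n : ℕ, 2 ≤ n → ∀ a : ℕ → ℝ,
      (|a 0| + |a 1| ≤ A) →
      (∀ j : ℕ, 2 ≤ j → j ≤ n - 1 → |a j| ≤ C₂ * p ^ j / ((n : ℝ) - 1)) →
      ∀ j : ℕ, j ≤ n - 1 →
        p ^ (-(j : ℝ)) *
          |(1 / ((n : ℝ) - j)) * ∑ m ∈ Finset.range (j + 1),
            (if m = j then (-1 : ℝ) else 1) * a m| ≤ C₃ / ((n : ℝ) - 1) := by
  have hp1 : 0 < p - 1 := by linarith
  refine ⟨(A + C₂) * (p / (p - 1)), by positivity, fun n hn a ha₀₁ ha j hj => ?_⟩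
  have hjn : j < n := by omega
  have hn1 : (1 : ℝ) ≤ n - 1 := by
    have : (2 : ℝ) ≤ n := by exact_mod_cast hn
    linarith
  have hnj : (1 : ℝ) ≤ n - j := by
    have : (j : ℝ) + 1 ≤ n := by exact_mod_cast hjn
    linarith
  have hsigns : |∑ m ∈ range (j + 1), (if m = j then (-1 : ℝ) else 1) * a m| ≤
      ∑ m ∈ range (j + 1), |a m| :=
    (abs_sum_le_sum_abs _ _).trans_eq (sum_congr rfl fun m _ => by split_ifs <;> simp)
  have hsum := sum_abs_le_of_coeff_bounds hp hC₂.le (by omega) ha₀₁ ha hj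
  have hweight := inv_pow_div_sub_le hp hn hjn
  rw [Real.rpow_neg (by positivity), Real.rpow_natCast, abs_mul,
    abs_of_pos (by positivity : 0 < 1 / ((n : ℝ) - j)), ← mul_assoc, mul_one_div]
  calc (p ^ j)⁻¹ / (n - j) * |∑ m ∈ range (j + 1), (if m = j then (-1 : ℝ) else 1) * a m|
      ≤ (p ^ j)⁻¹ / (n - j) * (A + C₂ * (p / (p - 1)) * p ^ j / (n - 1)) := by
        gcongr; exact hsigns.trans hsum
    _ = A * ((p ^ j)⁻¹ / (n - j)) + C₂ * (p / (p - 1)) / ((n - 1) * (n - j)) := by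
        field_simp
    _ ≤ A * (p / (p - 1) / (n - 1)) + C₂ * (p / (p - 1)) / ((n - 1) * 1) := by
        gcongr
    _ = (A + C₂) * (p / (p - 1)) / (n - 1) := by ring
end

section
/- Let x_k, z_k : ℝ → ℂ be differentiable functions satisfying x_k' = i z_{k+1} and z_k' = i x_{k+1} + θ' y_k, y_k' = θ' z_k for all k. Define for fixed n ≥ k ≥ 1: g_{n+1,k} = Σ_{j=0}^{n−k} (x_{k+j} x_{n−j} + y_{k+j} y_{n−j} − z_{k+j} z_{n−j}). Then g_{n+1,k}' = 2i(x_k z_{n+1} − z_k x_{n+1}). -/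
open Complex Finset

/- The quadratic form `B(i, j) = x_i x_j + y_i y_j - z_i z_j` has derivative
`i (W(i, j+1) - W(i+1, j))` with `W(a, b) = x_a z_b - z_a x_b`: the `θ'`-terms cancel between
`y_i y_j` and `z_i z_j`. Along the antidiagonal `i + j = n` these derivatives telescope, and the
antisymmetry of `W` doubles the surviving boundary term. -/

theorem sum_range_sub_telescope_antidiagonal {M : Type*} [AddCommGroup M] (W : ℕ → ℕ → M)
    {n k : ℕ} (hkn : k ≤ n) :
    ∑ j ∈ range (n - k + 1), (W (k + j) (n - j + 1) - W (k + j + 1) (n - j)) =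
      W k (n + 1) - W (n + 1) k := by
  let f : ℕ → M := fun j => W (k + j) (n + 1 - j)
  calc ∑ j ∈ range (n - k + 1), (W (k + j) (n - j + 1) - W (k + j + 1) (n - j))
      = ∑ j ∈ range (n - k + 1), (f j - f (j + 1)) := by
        refine sum_congr rfl fun j hj => ?_
        have hjn : j ≤ n := by rw [mem_range] at hj; omega
        simp only [f, ← add_assoc, Nat.sub_add_comm hjn, Nat.add_sub_add_right]
    _ = f 0 - f (n - k + 1) := sum_range_sub' f _
    _ = W k (n + 1) - W (n + 1) k := by
        simp only [f, add_zero, Nat.sub_zero]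
        rw [show k + (n - k + 1) = n + 1 by omega, show n + 1 - (n - k + 1) = k by omega]

theorem hasDerivAt_quadratic_form {θ' : ℝ → ℂ} {x y z : ℕ → ℝ → ℂ}
    (hx : ∀ k t, HasDerivAt (x k) (I * z (k + 1) t) t)
    (hy : ∀ k t, HasDerivAt (y k) (θ' t * z k t) t)
    (hz : ∀ k t, HasDerivAt (z k) (I * x (k + 1) t + θ' t * y k t) t) (i j : ℕ) (t : ℝ) :
    HasDerivAt (fun s => x i s * x j s + y i s * y j s - z i s * z j s)
      (I * ((x i t * z (j + 1) t - z i t * x (j + 1) t) -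
        (x (i + 1) t * z j t - z (i + 1) t * x j t))) t := by
  refine ((((hx i t).fun_mul (hx j t)).fun_add ((hy i t).fun_mul (hy j t))).fun_sub
    ((hz i t).fun_mul (hz j t))).congr_deriv ?_
  ring

theorem g_derivative_telescopes_general (θ' : ℝ → ℂ)
    (x y z : ℕ → ℝ → ℂ)
    (hx : ∀ k t, HasDerivAt (x k) (Complex.I * z (k + 1) t) t)
    (hy : ∀ k t, HasDerivAt (y k) (θ' t * z k t) t)
    (hz : ∀ k t, HasDerivAt (z k) (Complex.I * x (k + 1) t + θ' t * y k t) t)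
    (n k : ℕ) (hkn : k ≤ n) (t : ℝ) :
    HasDerivAt
      (fun s : ℝ => ∑ j ∈ Finset.range (n - k + 1),
        (x (k + j) s * x (n - j) s + y (k + j) s * y (n - j) s -
          z (k + j) s * z (n - j) s))
      (2 * Complex.I * (x k t * z (n + 1) t - z k t * x (n + 1) t)) t := by
  have hsum := HasDerivAt.fun_sum fun j (_ : j ∈ range (n - k + 1)) =>
    hasDerivAt_quadratic_form hx hy hz (k + j) (n - j) t
  rw [← mul_sum, sum_range_sub_telescope_antidiagonal
    (fun a b => x a t * z b t - z a t * x b t) hkn] at hsum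
  exact hsum.congr_deriv (by ring)

/-- If `x_k' = i z_{k+1}`, `y_k' = θ' z_k`, `z_k' = i x_{k+1} + θ' y_k`, then for
`1 ≤ k ≤ n` and `g_{n+1,k} = Σ_{j=0}^{n−k}(x_{k+j}x_{n−j} + y_{k+j}y_{n−j} − z_{k+j}z_{n−j})`,
one has `g_{n+1,k}' = 2i(x_k z_{n+1} − z_k x_{n+1})`. -/
theorem g_derivative_telescopes (θ' : ℝ → ℂ) (hθ : Continuous θ')
    (x y z : ℕ → ℝ → ℂ)
    (hx : ∀ k t, HasDerivAt (x k) (Complex.I * z (k + 1) t) t)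
    (hy : ∀ k t, HasDerivAt (y k) (θ' t * z k t) t)
    (hz : ∀ k t, HasDerivAt (z k) (Complex.I * x (k + 1) t + θ' t * y k t) t)
    (n k : ℕ) (hk : 1 ≤ k) (hkn : k ≤ n) (t : ℝ) :
    HasDerivAt
      (fun s : ℝ => ∑ j ∈ Finset.range (n - k + 1),
        (x (k + j) s * x (n - j) s + y (k + j) s * y (n - j) s -
          z (k + j) s * z (n - j) s))
      (2 * Complex.I * (x k t * z (n + 1) t - z k t * x (n + 1) t)) t :=
  g_derivative_telescopes_general θ' x y z hx hy hz n k hkn t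
end
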